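/- For every m ≥ 1, every subgraph of Y_m with fewer than 2·2^{2^{2m+1}} + 2 vertices is acyclic (contains no cycle). -/

import Mathlib

open SimpleGraph

/-- A wiring of `G` into `H`: a map on vertices together with, for each edge
(given by an ordered adjacent pair, compatibly with reversal), a walk in `H`
joining the images of the endpoints. -/
structure Wiring {V : Type*} {W : Type*} (G : SimpleGraph V) (H : SimpleGraph W) where
  toFun : V → W
  walk : ∀ u v : V, G.Adj u v → H.Walk (toFun u) (toFun v)
  walk_symm : ∀ (u v : V) (h : G.Adj u v), walk v u (G.adj_symm h) = (walk u v h).reverse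

namespace Wiring

variable {V : Type*} {W : Type*} {G : SimpleGraph V} {H : SimpleGraph W}

/-- A wiring is a coarse `k`-wiring if the vertex map is at most `k`-to-one and
every edge of `H` lies on at most `k` of the chosen walks.  (Since walks are
indexed by *ordered* adjacent pairs, with the walk of `(v,u)` the reverse of the
walk of `(u,v)`, each edge of `G` is counted twice; hence the bound `2 * k`.) -/
def IsCoarse (Wr : Wiring G H) (k : ℕ) : Prop :=
  (∀ w : W, {v : V | Wr.toFun v = w}.ncard ≤ k) ∧
  (∀ e : Sym2 W, e ∈ H.edgeSet →
    {p : V × V | ∃ h : G.Adj p.1 p.2, e ∈ (Wr.walk p.1 p.2 h).edges}.ncard ≤ 2 * k)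

/-- The vertices of the image of a wiring. -/
def imageVerts (Wr : Wiring G H) : Set W :=
  Set.range Wr.toFun ∪ {w : W | ∃ (u v : V) (h : G.Adj u v), w ∈ (Wr.walk u v h).support}

/-- The volume of a wiring: the number of vertices of its image. -/
noncomputable def volume (Wr : Wiring G H) : ℕ := Wr.imageVerts.ncard

/-- The image of a wiring, as a subgraph of the target. -/
def imageSubgraph (Wr : Wiring G H) : H.Subgraph where
  verts := Wr.imageVerts
  Adj w w' := ∃ (u v : V) (h : G.Adj u v), (Wr.walk u v h).toSubgraph.Adj w w'
  adj_sub := by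
    rintro a b ⟨u, v, h, ha⟩
    exact (Wr.walk u v h).toSubgraph.adj_sub ha
  edge_vert := by
    rintro a b ⟨u, v, h, ha⟩
    refine Or.inr ⟨u, v, h, ?_⟩
    have := (Wr.walk u v h).toSubgraph.edge_vert ha
    rwa [SimpleGraph.Walk.verts_toSubgraph] at this
  symm := by
    refine ⟨?_⟩
    rintro a b ⟨u, v, h, ha⟩
    exact ⟨u, v, h, ha.symm⟩

end Wiring

/-- `wir k G H` : the minimal volume of a coarse `k`-wiring of `G` into `H`
(`⊤` if there is none). -/
noncomputable def wir {V : Type*} {W : Type*} (k : ℕ)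
    (G : SimpleGraph V) (H : SimpleGraph W) : ℕ∞ :=
  sInf {N : ℕ∞ | ∃ Wr : Wiring G H, Wr.IsCoarse k ∧ N = (Wr.volume : ℕ∞)}

/-- The `k`-wiring profile of `X` into `H`. -/
noncomputable def wirProfile {V : Type*} {W : Type*}
    (X : SimpleGraph V) (H : SimpleGraph W) (k n : ℕ) : ℕ∞ :=
  sSup {N : ℕ∞ | ∃ Γ : X.Subgraph, Γ.verts.Finite ∧ Γ.verts.ncard ≤ n ∧ N = wir k Γ.coe H}

/-- One-directional adjacency generating the 2-dimensional integer grid. -/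
def gridStep (p q : ℤ × ℤ) : Prop :=
  (p.1 = q.1 ∧ q.2 = p.2 + 1) ∨ (p.2 = q.2 ∧ q.1 = p.1 + 1)

/-- The 2-dimensional integer grid: vertices `ℤ²`, edges between points at distance 1. -/
def grid : SimpleGraph (ℤ × ℤ) where
  Adj p q := p ≠ q ∧ (gridStep p q ∨ gridStep q p)
  symm := ⟨fun p q h => ⟨h.1.symm, h.2.symm⟩⟩
  loopless := ⟨fun p h => h.1 rfl⟩

/-- One-directional adjacency for the column graphs: vertical steps everywhere,
horizontal steps at heights divisible by `t`. -/
def colStep (t : ℕ) (p q : ℕ × ℕ) : Prop :=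
  (p.1 = q.1 ∧ q.2 = p.2 + 1) ∨ (p.2 = q.2 ∧ t ∣ p.2 ∧ q.1 = p.1 + 1)

/-- Vertices of `X_n`. -/
def XVert (f : ℕ → ℕ) (n : ℕ) : Type :=
  {p : ℕ × ℕ // p.1 < f n ∧ p.2 ≤ 2 ^ 2 ^ (2 * n) * f n}

/-- The graph `X_n`. -/
def Xgraph (f : ℕ → ℕ) (n : ℕ) : SimpleGraph (XVert f n) where
  Adj u v := u ≠ v ∧ (colStep (2 ^ 2 ^ (2 * n)) u.val v.val ∨ colStep (2 ^ 2 ^ (2 * n)) v.val u.val)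
  symm := ⟨fun u v h => ⟨h.1.symm, h.2.symm⟩⟩
  loopless := ⟨fun u h => h.1 rfl⟩

/-- Vertices of `Y_n`. -/
def YVert (f : ℕ → ℕ) (n : ℕ) : Type :=
  {p : ℕ × ℕ // p.1 < f n ∧ p.2 ≤ 2 ^ 2 ^ (2 * n + 1) * f n}

/-- The graph `Y_n`. -/
def Ygraph (f : ℕ → ℕ) (n : ℕ) : SimpleGraph (YVert f n) where
  Adj u v := u ≠ v ∧
    (colStep (2 ^ 2 ^ (2 * n + 1)) u.val v.val ∨ colStep (2 ^ 2 ^ (2 * n + 1)) v.val u.val)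
  symm := ⟨fun u v h => ⟨h.1.symm, h.2.symm⟩⟩
  loopless := ⟨fun u h => h.1 rfl⟩

/-- Vertices of `X = ⨆ (n ≥ 1) X_n`: triples `(n, i, j)` with `(i,j)` a vertex of `X_n`. -/
def XTVert (f : ℕ → ℕ) : Type :=
  {p : ℕ × ℕ × ℕ // 1 ≤ p.1 ∧ p.2.1 < f p.1 ∧ p.2.2 ≤ 2 ^ 2 ^ (2 * p.1) * f p.1}

/-- The graph `X`, the disjoint union of the `X_n` for `n ≥ 1`. -/
def Xtotal (f : ℕ → ℕ) : SimpleGraph (XTVert f) where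
  Adj u v := u ≠ v ∧ u.val.1 = v.val.1 ∧
    (colStep (2 ^ 2 ^ (2 * u.val.1)) u.val.2 v.val.2 ∨
     colStep (2 ^ 2 ^ (2 * u.val.1)) v.val.2 u.val.2)
  symm := ⟨fun u v h => ⟨h.1.symm, h.2.1.symm, by rw [← h.2.1]; exact h.2.2.symm⟩⟩
  loopless := ⟨fun u h => h.1 rfl⟩

/-- Vertices of `Y = ⨆ (n ≥ 1) Y_n`. -/
def YTVert (f : ℕ → ℕ) : Type :=
  {p : ℕ × ℕ × ℕ // 1 ≤ p.1 ∧ p.2.1 < f p.1 ∧ p.2.2 ≤ 2 ^ 2 ^ (2 * p.1 + 1) * f p.1}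

/-- The graph `Y`, the disjoint union of the `Y_n` for `n ≥ 1`. -/
def Ytotal (f : ℕ → ℕ) : SimpleGraph (YTVert f) where
  Adj u v := u ≠ v ∧ u.val.1 = v.val.1 ∧
    (colStep (2 ^ 2 ^ (2 * u.val.1 + 1)) u.val.2 v.val.2 ∨
     colStep (2 ^ 2 ^ (2 * u.val.1 + 1)) v.val.2 u.val.2)
  symm := ⟨fun u v h => ⟨h.1.symm, h.2.1.symm, by rw [← h.2.1]; exact h.2.2.symm⟩⟩
  loopless := ⟨fun u h => h.1 rfl⟩

/-!
A cycle in `Y_m` has all its horizontal edges at heights divisible by `T = 2^(2^(2m+1))`, and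
the height changes by at most one along each edge. If the cycle uses horizontal edges at two
different heights `A < B`, then `B - A ≥ T`, and the cycle must climb from `A` to `B` and come
back down, so it has at least `2T + 2` edges. Otherwise all its horizontal edges lie in a single
row, so the cycle lives in a comb (a row with vertical teeth), which is a forest: the cycle
vertex farthest from the row (and, among those, rightmost) would have two distinct neighbours
on the cycle, but it has only one neighbour that is not higher in this order.
-/

namespace SimpleGraph

variable {V : Type*} {G : SimpleGraph V}

theorem isAcyclic_of_subsingleton_not_lt {β : Type*} [Preorder β] (ψ : V → β)
    (h : ∀ v, {w | G.Adj v w ∧ ¬ ψ v < ψ w}.Subsingleton) : G.IsAcyclic := by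
  classical
  intro u c hc
  obtain ⟨v, hv, hmax⟩ := c.support.toFinset.exists_maximalFor ψ ⟨u, by simp⟩
  rw [List.mem_toFinset] at hv
  obtain ⟨x, y, hxy, hnbr⟩ := Set.ncard_eq_two.1 (hc.ncard_neighborSet_toSubgraph_eq_two hv)
  have hsub : c.toSubgraph.neighborSet v ⊆ {w | G.Adj v w ∧ ¬ ψ v < ψ w} := by
    intro w hw
    refine ⟨c.toSubgraph.adj_sub hw, fun hlt => hlt.not_ge (hmax ?_ hlt.le)⟩
    exact List.mem_toFinset.2 (c.mem_support_of_adj_toSubgraph hw.symm)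
  exact hxy (h v (hsub (by simp [hnbr])) (hsub (by simp [hnbr])))

namespace Walk

theorem IsCycle.length_le_card [Finite V] {u : V} {c : G.Walk u u} (hc : c.IsCycle) :
    c.length ≤ Nat.card V := by
  have := Fintype.ofFinite V
  rw [Nat.card_eq_fintype_card, ← Nat.add_one_le_add_one_iff, ← c.length_support]
  simpa using hc.support_nodup.length_le_card

variable {h : V → ℕ}

theorem apply_getVert_le_apply_getVert_add (hh : ∀ u v, G.Adj u v → h u ≤ h v + 1) {u v : V}
    (p : G.Walk u v) {i j : ℕ} (hij : i ≤ j) :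
    h (p.getVert i) ≤ h (p.getVert j) + (j - i) ∧
      h (p.getVert j) ≤ h (p.getVert i) + (j - i) := by
  induction j, hij using Nat.le_induction with
  | base => simp
  | succ j hij ih =>
    rcases lt_or_ge j p.length with hj | hj
    · have hadj := p.adj_getVert_succ hj
      have := hh _ _ hadj
      have := hh _ _ hadj.symm
      omega
    · rw [p.getVert_of_length_le (by omega : p.length ≤ j + 1)]
      rw [p.getVert_of_length_le hj] at ih
      omega

theorem two_mul_sub_add_two_le_length (hh : ∀ u v, G.Adj u v → h u ≤ h v + 1) {u : V}
    (c : G.Walk u u) {a b : ℕ} (ha : a < c.length) (hb : b < c.length)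
    (hfa : h (c.getVert (a + 1)) = h (c.getVert a))
    (hfb : h (c.getVert (b + 1)) = h (c.getVert b))
    (hab : h (c.getVert a) < h (c.getVert b)) :
    2 * (h (c.getVert b) - h (c.getVert a)) + 2 ≤ c.length := by
  have hclosed : c.getVert c.length = c.getVert 0 := by simp
  have lip := fun {i j : ℕ} (hij : i ≤ j) => c.apply_getVert_le_apply_getVert_add hh hij
  rcases lt_trichotomy a b with hlt | rfl | hgt
  · have := lip (by omega : a + 1 ≤ b)
    have := lip (by omega : b + 1 ≤ c.length)
    have := lip (Nat.zero_le a)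
    rw [hclosed] at *
    omega
  · omega
  · have := lip (by omega : b + 1 ≤ a)
    have := lip (by omega : a + 1 ≤ c.length)
    have := lip (Nat.zero_le b)
    rw [hclosed] at *
    omega

end Walk

end SimpleGraph

def colGraph (t : ℕ) : SimpleGraph (ℕ × ℕ) := SimpleGraph.fromRel (colStep t)

def comb (r : ℕ) : SimpleGraph (ℕ × ℕ) :=
  SimpleGraph.fromRel fun p q =>
    (p.1 = q.1 ∧ q.2 = p.2 + 1) ∨ (p.2 = r ∧ q.2 = r ∧ q.1 = p.1 + 1)

theorem comb_isAcyclic (r : ℕ) : (comb r).IsAcyclic := by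
  refine isAcyclic_of_subsingleton_not_lt (fun p : ℕ × ℕ => (p.2 - r + (r - p.2), p.1)) ?_
  rintro ⟨i, j⟩ ⟨i₁, j₁⟩ ⟨h₁, hlt₁⟩ ⟨i₂, j₂⟩ ⟨h₂, hlt₂⟩
  simp only [comb, fromRel_adj, ne_eq, Prod.mk.injEq, Prod.lt_iff] at h₁ h₂ hlt₁ hlt₂ ⊢
  omega

namespace colGraph

variable {t : ℕ}

theorem snd_le_snd_add_one_of_adj {p q : ℕ × ℕ} (hpq : (colGraph t).Adj p q) :
    p.2 ≤ q.2 + 1 := by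
  obtain ⟨-, (h | h) | h | h⟩ := hpq <;> omega

theorem dvd_snd_of_adj {p q : ℕ × ℕ} (hpq : (colGraph t).Adj p q) (hflat : q.2 = p.2) :
    t ∣ p.2 := by
  obtain ⟨-, (h | ⟨-, hdvd, -⟩) | h | ⟨heq, hdvd, -⟩⟩ := hpq
  · omega
  · exact hdvd
  · omega
  · exact heq ▸ hdvd

theorem comb_adj_of_adj {r : ℕ} {p q : ℕ × ℕ} (hpq : (colGraph t).Adj p q)
    (hflat : q.2 = p.2 → p.2 = r) : (comb r).Adj p q := by
  obtain ⟨hne, hstep⟩ := hpq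
  simp only [comb, fromRel_adj]
  refine ⟨hne, ?_⟩
  rcases hstep with (h | h) | h | h <;> omega

theorem exists_flat_steps_of_isCycle {u : ℕ × ℕ} {c : (colGraph t).Walk u u} (hc : c.IsCycle) :
    ∃ a < c.length, ∃ b < c.length,
      (c.getVert (a + 1)).2 = (c.getVert a).2 ∧ (c.getVert (b + 1)).2 = (c.getVert b).2 ∧
      (c.getVert a).2 < (c.getVert b).2 := by
  by_contra hlevels
  obtain ⟨r, hr⟩ : ∃ r, ∀ k < c.length, (c.getVert (k + 1)).2 = (c.getVert k).2 →
      (c.getVert k).2 = r := by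
    by_cases hflat : ∃ k < c.length, (c.getVert (k + 1)).2 = (c.getVert k).2
    · obtain ⟨k₀, hk₀, hf₀⟩ := hflat
      refine ⟨(c.getVert k₀).2, fun k hk hf => le_antisymm ?_ ?_⟩ <;>
        refine not_lt.1 fun hlt => hlevels ?_
      exacts [⟨k₀, hk₀, k, hk, hf₀, hf, hlt⟩, ⟨k, hk, k₀, hk₀, hf, hf₀, hlt⟩]
    · exact ⟨0, fun k hk hf => (hflat ⟨k, hk, hf⟩).elim⟩
  have hedges : ∀ e ∈ c.edges, e ∈ (comb r).edgeSet := by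
    intro e he
    induction e using Sym2.ind with
    | _ x y =>
      obtain ⟨k, hk, hxy⟩ := (c.mk_mem_edges_iff_exists).1 he
      rw [← hxy]
      exact comb_adj_of_adj (c.adj_getVert_succ hk) (hr k hk)
  exact comb_isAcyclic r _ (hc.transfer hedges)

theorem two_mul_add_two_le_length_of_isCycle {u : ℕ × ℕ} {c : (colGraph t).Walk u u}
    (hc : c.IsCycle) : 2 * t + 2 ≤ c.length := by
  obtain ⟨a, ha, b, hb, hfa, hfb, hab⟩ := exists_flat_steps_of_isCycle hc
  have hclimb := c.two_mul_sub_add_two_le_length (h := Prod.snd)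
    (fun _ _ => snd_le_snd_add_one_of_adj) ha hb hfa hfb hab
  have hgap : t ≤ (c.getVert b).2 - (c.getVert a).2 :=
    Nat.le_of_dvd (by omega) (Nat.dvd_sub (dvd_snd_of_adj (c.adj_getVert_succ hb) hfb)
      (dvd_snd_of_adj (c.adj_getVert_succ ha) hfa))
  omega

end colGraph

instance (f : ℕ → ℕ) (n : ℕ) : Finite (YVert f n) :=
  ((Set.finite_Iio (f n)).prod (Set.finite_Iic (2 ^ 2 ^ (2 * n + 1) * f n))).subset
    (fun _ hp => Set.mk_mem_prod hp.1 hp.2) |>.to_subtype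

def Ygraph.toColGraph (f : ℕ → ℕ) (n : ℕ) :
    Ygraph f n →g colGraph (2 ^ 2 ^ (2 * n + 1)) where
  toFun := Subtype.val
  map_rel' h := ⟨Subtype.val_injective.ne h.1, h.2⟩

theorem statement9_general
    (f : ℕ → ℕ)
    (m : ℕ)
    (Γ : (Ygraph f m).Subgraph)
    (hΓ : Γ.verts.ncard < 2 * 2 ^ 2 ^ (2 * m + 1) + 2) :
    ∀ (v : Γ.verts) (c : Γ.coe.Walk v v), ¬ c.IsCycle := by
  intro v c hc
  have hinj : Function.Injective (Ygraph.toColGraph f m ∘ Γ.hom) :=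
    Subtype.val_injective.comp Subgraph.hom_injective
  have hlong := colGraph.two_mul_add_two_le_length_of_isCycle
    (hc.map (f := (Ygraph.toColGraph f m).comp Γ.hom) hinj)
  have hshort := hc.length_le_card
  rw [Walk.length_map] at hlong
  rw [Nat.card_coe_set_eq] at hshort
  omega

/-- For `m ≥ 1`, every subgraph of `Y_m` with fewer than
`2 · 2^(2^(2m+1)) + 2` vertices contains no cycle. -/
theorem statement9
    (f : ℕ → ℕ)
    (hsurj : ∀ k, 1 ≤ k → ∃ n, 1 ≤ n ∧ f n = k)
    (hf1 : f 1 = 1)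
    (hf : ∀ n, 2 ≤ n → 2 ≤ f n ∧ f n ≤ n)
    (hinf : ∀ k, 2 ≤ k → {n | f n = k}.Infinite)
    (m : ℕ) (hm : 1 ≤ m)
    (Γ : (Ygraph f m).Subgraph)
    (hΓ : Γ.verts.ncard < 2 * 2 ^ 2 ^ (2 * m + 1) + 2) :
    ∀ (v : Γ.verts) (c : Γ.coe.Walk v v), ¬ c.IsCycle :=
  statement9_general f m Γ hΓ
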